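/- arXiv:2004.03263 — 2 statements merged into one kernel-verified Lean document; each statement's English description precedes it below -/
import Mathlib

section
/- Let $q$ be a prime power, $m \ge 1$, and $d$ an integer with $1 \le d \le q+1$. Then there exists a nonzero homogeneous polynomial $f \in \mathbb{F}_q[x_0, x_1, \dots, x_m]$ of degree $d$ whose number of zeros in $\mathbb{F}_q^{m+1} \setminus \{0\}$ is exactly $(q-1)\big(d\,q^{m-1} + p_{m-2}\big)$; thus the bound $d\,q^{m-1} + p_{m-2}$ on the number of projective zeros of a degree-$d$ hypersurface is attained. -/
/-!
Take `f = x₁ᵏ ∏_{c ∈ T} (x₀ - c x₁)` with `T ⊆ 𝔽_q` of size `min d q` and `k = d - |T| ∈ {0, 1}`.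
Its nonzero zeros in `𝔽_q²` are the `q - 1` nonzero points on each of the `d` lines `x₀ = c x₁`
(and `x₁ = 0` when `k = 1`). Since `f` involves only `x₀, x₁`, each zero of `f` in `𝔽_q²` lifts to
`q^{m-1}` zeros in `𝔽_q^{m+1}`, so there are `((q - 1) d + 1) q^{m-1} - 1` nonzero zeros, which is
the claimed number because `(q - 1) p_{m-2} = q^{m-1} - 1`.
-/

open MvPolynomial Finset

theorem card_filter_ne_and_add_one {α : Type*} [Fintype α] [DecidableEq α] {a : α}
    {Q : α → Prop} [DecidablePred Q] (ha : Q a) :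
    #{x | x ≠ a ∧ Q x} + 1 = #{x | Q x} := by
  have : ({x | x ≠ a ∧ Q x} : Finset α) = ({x | Q x} : Finset α).erase a := by
    ext x
    simp [and_comm]
  rw [this, card_erase_add_one (by simpa using ha)]

theorem card_filter_apply_zero_one {α : Type*} [Fintype α] (n : ℕ) (P : α → α → Prop)
    [DecidableRel P] :
    #{x : Fin (n + 2) → α | P (x 0) (x 1)} = #{p : α × α | P p.1 p.2} * Fintype.card α ^ n := by
  let e : (Fin (n + 2) → α) ≃ (α × α) × (Fin n → α) :=
    (Fin.consEquiv fun _ => α).symm.trans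
      (((Equiv.refl α).prodCongr (Fin.consEquiv fun _ => α).symm).trans
        (Equiv.prodAssoc α α (Fin n → α)).symm)
  calc #{x : Fin (n + 2) → α | P (x 0) (x 1)}
      = #{y : (α × α) × (Fin n → α) | P y.1.1 y.1.2} := by
        apply card_equiv e
        intro x
        simp [e, Fin.consEquiv, Fin.tail]
    _ = _ := by
        rw [← univ_product_univ, filter_product_left (fun p : α × α => P p.1 p.2), card_product,
          card_univ, Fintype.card_fun, Fintype.card_fin]

section BinaryForm

variable {σ R : Type*} [CommRing R]

noncomputable def binaryForm (i j : σ) (T : Finset R) (k : ℕ) : MvPolynomial σ R :=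
  X j ^ k * ∏ c ∈ T, (X i - C c * X j)

theorem eval_binaryForm (i j : σ) (T : Finset R) (k : ℕ) (x : σ → R) :
    eval x (binaryForm i j T k) = x j ^ k * ∏ c ∈ T, (x i - c * x j) := by
  simp [binaryForm]

theorem isHomogeneous_binaryForm (i j : σ) (T : Finset R) (k : ℕ) :
    (binaryForm i j T k).IsHomogeneous (k + #T) := by
  have hprod : (∏ c ∈ T, (X i - C c * X j : MvPolynomial σ R)).IsHomogeneous #T := by
    simpa using IsHomogeneous.prod T _ (fun _ => 1) fun c _ =>
      (isHomogeneous_X R i).sub (by simpa using (isHomogeneous_C σ c).mul (isHomogeneous_X R j))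
  simpa [binaryForm] using ((isHomogeneous_X R j).pow k).mul hprod

theorem binaryForm_ne_zero [IsDomain R] {i j : σ} (hij : i ≠ j) (T : Finset R) (k : ℕ) :
    binaryForm i j T k ≠ 0 := by
  classical
  refine mul_ne_zero (pow_ne_zero _ (X_ne_zero j)) (prod_ne_zero_iff.mpr fun c _ h => ?_)
  simpa [Pi.single_apply, hij.symm] using congrArg (eval (Pi.single i 1)) h

end BinaryForm

section ZeroCount

variable {F : Type*} [Field F] [Fintype F] [DecidableEq F]

theorem card_binaryForm_fiber_of_ne_zero (T : Finset F) (k : ℕ) {b : F} (hb : b ≠ 0) :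
    #{a : F | b ^ k * ∏ c ∈ T, (a - c * b) = 0} = #T := by
  have : ({a : F | b ^ k * ∏ c ∈ T, (a - c * b) = 0} : Finset F) = T.image (· * b) := by
    ext a
    simp [hb, prod_eq_zero_iff, sub_eq_zero, @eq_comm _ a]
  rw [this, card_image_of_injective _ (mul_left_injective₀ hb)]

theorem card_binaryForm_fiber_zero (T : Finset F) (k : ℕ) :
    #{a : F | a ≠ 0 ∧ 0 ^ k * ∏ c ∈ T, (a - c * 0) = 0}
      = min k 1 * (Fintype.card F - 1) := by
  rcases Nat.eq_zero_or_pos k with rfl | hk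
  · simp +contextual
  · simp [zero_pow hk.ne', filter_ne', card_erase_of_mem, Nat.one_le_iff_ne_zero.mpr hk.ne']

theorem card_nonzero_zeros_binaryForm (T : Finset F) (k : ℕ) :
    #{p : F × F | p ≠ 0 ∧ p.2 ^ k * ∏ c ∈ T, (p.1 - c * p.2) = 0}
      = (Fintype.card F - 1) * (#T + min k 1) := by
  calc #{p : F × F | p ≠ 0 ∧ p.2 ^ k * ∏ c ∈ T, (p.1 - c * p.2) = 0}
      = ∑ b, #{a : F | (a, b) ≠ 0 ∧ b ^ k * ∏ c ∈ T, (a - c * b) = 0} := by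
        simp only [card_filter, Fintype.sum_prod_type_right]
    _ = #{a : F | a ≠ 0 ∧ 0 ^ k * ∏ c ∈ T, (a - c * 0) = 0}
          + ∑ b ∈ (univ : Finset F).erase 0, #T := by
        rw [← add_sum_erase _ _ (mem_univ 0)]
        congr 1
        · simp only [ne_eq, Prod.mk_eq_zero, and_true]
        · refine sum_congr rfl fun b hb => ?_
          have hb : b ≠ 0 := ne_of_mem_erase hb
          simp only [ne_eq, Prod.mk_eq_zero, hb, and_false, not_false_eq_true, true_and]
          exact card_binaryForm_fiber_of_ne_zero T k hb
    _ = (Fintype.card F - 1) * (#T + min k 1) := by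
        rw [card_binaryForm_fiber_zero, sum_const, card_erase_of_mem (mem_univ _), card_univ,
          smul_eq_mul]
        ring

end ZeroCount

/-- The bound `d q^{m-1} + p_{m-2}` on the number of projective zeros of a
degree-`d` hypersurface in `ℙ^m(𝔽_q)` (for `1 ≤ d ≤ q + 1`) is attained: there is
a nonzero homogeneous polynomial of degree `d` in `m + 1` variables over `𝔽_q`
with exactly `(q-1)(d q^{m-1} + p_{m-2})` zeros in `𝔽_q^{m+1} \ {0}`, where
`p_j = q^j + ⋯ + q + 1` for `j ≥ 0` and `p_j = 0` for `j < 0`. -/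
theorem stmt_3 (F : Type*) [Field F] [Fintype F] (q m d : ℕ)
    (hq : Fintype.card F = q) (hm : 1 ≤ m)
    (hd1 : 1 ≤ d) (hd2 : d ≤ q + 1)
    (pm2 : ℕ) (hpm2 : pm2 = if m < 2 then 0 else ∑ i ∈ Finset.range (m - 1), q ^ i) :
    ∃ f : MvPolynomial (Fin (m + 1)) F, f ≠ 0 ∧ f.IsHomogeneous d ∧
      Nat.card {x : Fin (m + 1) → F // x ≠ 0 ∧ eval x f = 0}
        = (q - 1) * (d * q ^ (m - 1) + pm2) := by
  classical
  obtain ⟨n, rfl⟩ := Nat.exists_eq_add_of_le' hm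
  replace hpm2 : pm2 = ∑ i ∈ range n, q ^ i := by rcases n with _ | n <;> simp [hpm2]
  obtain ⟨T, -, hT⟩ := exists_subset_card_eq (s := (univ : Finset F)) (n := min d q)
    (by simp [hq])
  obtain ⟨k, hk⟩ : ∃ k, k = d - min d q := ⟨_, rfl⟩
  have hdeg : k + #T = d := by omega
  refine ⟨binaryForm 0 1 T k, binaryForm_ne_zero zero_ne_one _ _,
    hdeg ▸ isHomogeneous_binaryForm _ _ _ _, ?_⟩
  set P : F → F → Prop := fun a b => b ^ k * ∏ c ∈ T, (a - c * b) = 0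
  have hP0 : P 0 0 := by
    simp only [P, mul_zero, sub_zero, prod_const, ← pow_add, hdeg]
    exact zero_pow (by omega)
  have hpairs : #{p : F × F | p ≠ 0 ∧ P p.1 p.2} = (q - 1) * d := by
    rw [card_nonzero_zeros_binaryForm, hq, ← hdeg]
    congr 1
    omega
  have hpoints : #{x : Fin (n + 2) → F | x ≠ 0 ∧ P (x 0) (x 1)} + 1
      = ((q - 1) * d + 1) * q ^ n := by
    rw [card_filter_ne_and_add_one (a := 0) (Q := fun x : Fin (n + 2) → F => P (x 0) (x 1)) hP0,
      card_filter_apply_zero_one n P,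
      ← card_filter_ne_and_add_one (a := 0) (Q := fun p : F × F => P p.1 p.2) hP0, hpairs, hq]
  have hq1 : 1 ≤ q := hq ▸ Fintype.card_pos
  have hgeom := geom_sum_mul_of_one_le hq1 n
  have hqn : 1 ≤ q ^ n := Nat.one_le_pow _ _ hq1
  simp only [Nat.card_eq_fintype_card, Fintype.card_subtype, eval_binaryForm, Nat.add_sub_cancel]
  change #{x : Fin (n + 2) → F | x ≠ 0 ∧ P (x 0) (x 1)} = _
  rw [hpm2, mul_add, mul_comm _ (∑ i ∈ range n, q ^ i), hgeom, ← mul_assoc]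
  rw [add_one_mul] at hpoints
  omega
end

section
/- Let $q$ be a prime power, $m \ge 1$, and $d$ an integer with $1 \le d \le q$. If a homogeneous polynomial $f \in \mathbb{F}_q[x_0, x_1, \dots, x_m]$ of degree $d$ satisfies $f(x) = 0$ for every $x \in \mathbb{F}_q^{m+1}$, then $f = 0$. Consequently, the evaluation map from the space of homogeneous polynomials of degree $d$ in $m+1$ variables over $\mathbb{F}_q$ to $\mathbb{F}_q$-valued functions on $\mathbb{F}_q^{m+1}$ is injective, so the projective Reed-Muller code $\mathrm{PRM}_q(d,m)$ has dimension $\binom{m+d}{d}$. -/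
/-!
A nonzero homogeneous polynomial of degree `d` over a domain `R` with `d ≤ #R` does not vanish
identically on `R^{m+1}` (Mathlib's `IsHomogeneous.eq_zero_of_forall_eval_eq_zero_of_le_card`).
So the evaluation map is injective on degree-`d` forms, and the code has the dimension of that
space: the number of degree-`d` monomials in `m + 1` variables, `(m + 1) multichoose d`.
-/

open MvPolynomial

namespace MvPolynomial

theorem finrank_homogeneousSubmodule (σ R : Type*) [Fintype σ] [CommSemiring R]
    [StrongRankCondition R] (d : ℕ) :
    Module.finrank R (homogeneousSubmodule σ R d) = (Fintype.card σ).multichoose d := by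
  classical
  rw [homogeneousSubmodule_eq_finsupp_supported, ← restrictSupport,
    Module.finrank_eq_nat_card_basis (basisRestrictSupport R _), ← Sym.card_sym_eq_multichoose,
    ← Nat.card_eq_fintype_card]
  exact Nat.card_congr (Sym.equivNatSum σ d).symm

end MvPolynomial

theorem stmt_4_general (F : Type*) [Field F] [Fintype F] (q m d : ℕ)
    (hq : Fintype.card F = q) (hd2 : d ≤ q) :
    (∀ f : MvPolynomial (Fin (m + 1)) F, f.IsHomogeneous d →
      (∀ x : Fin (m + 1) → F, eval x f = 0) → f = 0) ∧
    Function.Injective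
      ((LinearMap.pi fun x : Fin (m + 1) → F => (aeval x).toLinearMap) ∘ₗ
        (homogeneousSubmodule (Fin (m + 1)) F d).subtype) ∧
    Module.finrank F (LinearMap.range
      ((LinearMap.pi fun x : Fin (m + 1) → F => (aeval x).toLinearMap) ∘ₗ
        (homogeneousSubmodule (Fin (m + 1)) F d).subtype)) = (m + d).choose d := by
  have hvanish (f : MvPolynomial (Fin (m + 1)) F) (hf : f.IsHomogeneous d)
      (h : ∀ x, eval x f = 0) : f = 0 :=
    hf.eq_zero_of_forall_eval_eq_zero_of_le_card h <| by
      rw [Cardinal.mk_fintype, hq]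
      exact_mod_cast hd2
  set ev := (LinearMap.pi fun x : Fin (m + 1) → F => (aeval x).toLinearMap) ∘ₗ
    (homogeneousSubmodule (Fin (m + 1)) F d).subtype
  have hinj : Function.Injective ev := by
    rw [← LinearMap.ker_eq_bot, Submodule.eq_bot_iff]
    rintro ⟨f, hf⟩ hker
    exact Subtype.ext (hvanish f hf fun x => congrFun hker x)
  refine ⟨hvanish, hinj, ?_⟩
  rw [LinearMap.finrank_range_of_inj hinj, finrank_homogeneousSubmodule, Fintype.card_fin,
    Nat.multichoose_eq, Nat.add_right_comm, Nat.add_sub_cancel]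

/-- For `1 ≤ d ≤ q`, a homogeneous polynomial of degree `d` in `m + 1` variables
over `𝔽_q` vanishing at every point of `𝔽_q^{m+1}` is the zero polynomial; hence
the evaluation map from homogeneous polynomials of degree `d` to `𝔽_q`-valued
functions on `𝔽_q^{m+1}` is injective, and the projective Reed–Muller code
`PRM_q(d, m)` (the image of this evaluation map) has dimension `(m + d).choose d`. -/
theorem stmt_4 (F : Type*) [Field F] [Fintype F] (q m d : ℕ)
    (hq : Fintype.card F = q) (hm : 1 ≤ m) (hd1 : 1 ≤ d) (hd2 : d ≤ q) :
    (∀ f : MvPolynomial (Fin (m + 1)) F, f.IsHomogeneous d →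
      (∀ x : Fin (m + 1) → F, eval x f = 0) → f = 0) ∧
    Function.Injective
      ((LinearMap.pi fun x : Fin (m + 1) → F => (aeval x).toLinearMap) ∘ₗ
        (homogeneousSubmodule (Fin (m + 1)) F d).subtype) ∧
    Module.finrank F (LinearMap.range
      ((LinearMap.pi fun x : Fin (m + 1) → F => (aeval x).toLinearMap) ∘ₗ
        (homogeneousSubmodule (Fin (m + 1)) F d).subtype)) = (m + d).choose d :=
  stmt_4_general F q m d hq hd2
end
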